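/- In an octagon with sides labeled cyclically ∂T, α, ∂T, β, ∂T, α, ∂T, β, suppose a disjoint collection of properly embedded arcs meets the two α-sides in p endpoints each and the two β-sides in q endpoints each, with p < q, and no arc has both endpoints on the same side or on a ∂T-side. Model this combinatorially: arcs are chords of a convex octagon with endpoints only on the α- and β-sides, pairwise non-crossing, with each α-side carrying p endpoints and each β-side carrying q endpoints. Then exactly 2p arcs join an α-side to a β-side, and exactly q - p arcs join the two β-sides to each other, and no arc joins the two α-sides. -/

import Mathlib

/-- The point `t` lies in the interior of side `i` of the octagon, where side `i`
is the interval `(i - 1, i)` on the boundary, parameterized by `[0, 8)`. -/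
def InSide (i : ℕ) (t : ℝ) : Prop := (i : ℝ) - 1 < t ∧ t < i

noncomputable instance (i : ℕ) (t : ℝ) : Decidable (InSide i t) := by
  unfold InSide; infer_instance

/-- `t` lies on one of the two α-sides (sides `2` and `6`). -/
def OnAlpha (t : ℝ) : Prop := InSide 2 t ∨ InSide 6 t

/-- `t` lies on one of the two β-sides (sides `4` and `8`). -/
def OnBeta (t : ℝ) : Prop := InSide 4 t ∨ InSide 8 t

noncomputable instance (t : ℝ) : Decidable (OnAlpha t) := by unfold OnAlpha; infer_instance
noncomputable instance (t : ℝ) : Decidable (OnBeta t) := by unfold OnBeta; infer_instance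

/-- Two chords of the octagon (each recorded as an ordered pair of boundary
parameters) cross. -/
def Crosses (c c' : ℝ × ℝ) : Prop :=
  (c.1 < c'.1 ∧ c'.1 < c.2 ∧ c.2 < c'.2) ∨ (c'.1 < c.1 ∧ c.1 < c'.2 ∧ c'.2 < c.2)


/-!
Counting endpoints on the α-sides gives `#(α–β chords) + 2 * #(α–α chords) = 2p`, and on the
β-sides `#(α–β chords) + 2 * #(β–β chords) = 2q`. An α–α chord runs from side 2 to side 6 and a
β–β chord from side 4 to side 8, so the two would cross; hence one of the two kinds is absent, and
`p < q` rules out the β–β chords being the absent kind.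
-/

theorem InSide.lt {i j : ℕ} {s t : ℝ} (hij : i < j) (hs : InSide i s) (ht : InSide j t) :
    s < t := by
  have : (i : ℝ) + 1 ≤ j := by exact_mod_cast hij
  linarith [hs.2, ht.1]

theorem InSide.eq {i j : ℕ} {t : ℝ} (hi : InSide i t) (hj : InSide j t) : i = j := by
  by_contra hne
  rcases Ne.lt_or_gt hne with h | h
  · exact lt_irrefl t (hi.lt h hj)
  · exact lt_irrefl t (hj.lt h hi)

theorem onAlpha_xor_onBeta {t : ℝ} (h : InSide 2 t ∨ InSide 4 t ∨ InSide 6 t ∨ InSide 8 t) :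
    Xor (OnAlpha t) (OnBeta t) := by
  refine (xor_iff_or_and_not_and _ _).2 ⟨?_, ?_⟩
  · unfold OnAlpha OnBeta
    tauto
  · rintro ⟨hα | hα, hβ | hβ⟩ <;> exact absurd (hα.eq hβ) (by norm_num)

theorem inSide_of_inSide_or {i j : ℕ} (hij : i < j) {s t : ℝ} (hst : s < t)
    (hs : InSide i s ∨ InSide j s) (ht : InSide i t ∨ InSide j t)
    (hi : ¬(InSide i s ∧ InSide i t)) (hj : ¬(InSide j s ∧ InSide j t)) :
    InSide i s ∧ InSide j t := by
  rcases hs with hs | hs <;> rcases ht with ht | ht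
  · exact absurd ⟨hs, ht⟩ hi
  · exact ⟨hs, ht⟩
  · exact absurd hst (ht.lt hij hs).not_gt
  · exact absurd ⟨hs, ht⟩ hj

theorem crosses_of_inSide {i j k l : ℕ} (hij : i < j) (hjk : j < k) (hkl : k < l)
    {c c' : ℝ × ℝ} (h₁ : InSide i c.1) (h₂ : InSide j c'.1) (h₃ : InSide k c.2)
    (h₄ : InSide l c'.2) : Crosses c c' :=
  Or.inl ⟨h₁.lt hij h₂, h₂.lt hjk h₃, h₃.lt hkl h₄⟩

theorem crosses_of_onAlpha_of_onBeta {c c' : ℝ × ℝ} (hc : c.1 < c.2) (hc' : c'.1 < c'.2)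
    (hα : OnAlpha c.1 ∧ OnAlpha c.2) (hβ : OnBeta c'.1 ∧ OnBeta c'.2)
    (h₂ : ¬(InSide 2 c.1 ∧ InSide 2 c.2)) (h₆ : ¬(InSide 6 c.1 ∧ InSide 6 c.2))
    (h₄ : ¬(InSide 4 c'.1 ∧ InSide 4 c'.2)) (h₈ : ¬(InSide 8 c'.1 ∧ InSide 8 c'.2)) :
    Crosses c c' := by
  obtain ⟨hc₂, hc₆⟩ := inSide_of_inSide_or (by norm_num) hc hα.1 hα.2 h₂ h₆
  obtain ⟨hc'₄, hc'₈⟩ := inSide_of_inSide_or (by norm_num) hc' hβ.1 hβ.2 h₄ h₈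
  exact crosses_of_inSide (by norm_num) (by norm_num) (by norm_num) hc₂ hc'₄ hc₆ hc'₈

theorem card_filter_inSide_or {X : Type*} [DecidableEq X] (s : Finset X) (f : X → ℝ) {i j : ℕ}
    (hij : i ≠ j) :
    (s.filter fun x => InSide i (f x) ∨ InSide j (f x)).card =
      (s.filter fun x => InSide i (f x)).card + (s.filter fun x => InSide j (f x)).card := by
  rw [Finset.filter_or, Finset.card_union_of_disjoint]
  exact Finset.disjoint_filter.2 fun x _ hi hj => hij (hi.eq hj)

theorem Finset.card_filter_fst_add_card_filter_snd {X : Type*} (s : Finset (X × X))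
    (P Q : X → Prop) [DecidablePred P] [DecidablePred Q]
    (h : ∀ c ∈ s, Xor (P c.1) (Q c.1) ∧ Xor (P c.2) (Q c.2)) :
    (s.filter fun c => P c.1).card + (s.filter fun c => P c.2).card =
      (s.filter fun c => P c.1 ∧ Q c.2 ∨ Q c.1 ∧ P c.2).card +
        2 * (s.filter fun c => P c.1 ∧ P c.2).card := by
  simp only [Finset.card_filter, Finset.mul_sum, ← Finset.sum_add_distrib]
  refine Finset.sum_congr rfl fun c hc => ?_
  obtain ⟨h₁, h₂⟩ := h c hc
  rw [xor_iff_iff_not] at h₁ h₂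
  by_cases p₁ : P c.1 <;> by_cases p₂ : P c.2 <;> simp_all

theorem octagon_lemma_general (p q : ℕ) (hpq : p < q) (chords : Finset (ℝ × ℝ))
    (hord : ∀ c ∈ chords, c.1 < c.2)
    (hsides : ∀ c ∈ chords,
      (InSide 2 c.1 ∨ InSide 4 c.1 ∨ InSide 6 c.1 ∨ InSide 8 c.1) ∧
      (InSide 2 c.2 ∨ InSide 4 c.2 ∨ InSide 6 c.2 ∨ InSide 8 c.2))
    (hnotsame : ∀ c ∈ chords, ∀ i ∈ ([2, 4, 6, 8] : List ℕ),
      ¬(InSide i c.1 ∧ InSide i c.2))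
    (hnocross : ∀ c ∈ chords, ∀ c' ∈ chords, ¬Crosses c c')
    (hcount2 : (chords.filter (fun c => InSide 2 c.1)).card +
               (chords.filter (fun c => InSide 2 c.2)).card = p)
    (hcount6 : (chords.filter (fun c => InSide 6 c.1)).card +
               (chords.filter (fun c => InSide 6 c.2)).card = p)
    (hcount4 : (chords.filter (fun c => InSide 4 c.1)).card +
               (chords.filter (fun c => InSide 4 c.2)).card = q)
    (hcount8 : (chords.filter (fun c => InSide 8 c.1)).card +
               (chords.filter (fun c => InSide 8 c.2)).card = q) :
    (chords.filter (fun c => (OnAlpha c.1 ∧ OnBeta c.2) ∨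
      (OnBeta c.1 ∧ OnAlpha c.2))).card = 2 * p ∧
    (chords.filter (fun c => OnBeta c.1 ∧ OnBeta c.2)).card = q - p ∧
    (chords.filter (fun c => OnAlpha c.1 ∧ OnAlpha c.2)).card = 0 := by
  have hxor (c) (hc : c ∈ chords) :
      Xor (OnAlpha c.1) (OnBeta c.1) ∧ Xor (OnAlpha c.2) (OnBeta c.2) :=
    ⟨onAlpha_xor_onBeta (hsides c hc).1, onAlpha_xor_onBeta (hsides c hc).2⟩
  have hα := chords.card_filter_fst_add_card_filter_snd OnAlpha OnBeta hxor
  have hβ := chords.card_filter_fst_add_card_filter_snd OnBeta OnAlpha fun c hc => by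
    simpa only [xor_comm] using hxor c hc
  rw [Finset.filter_congr fun _ _ => or_comm] at hβ
  have hαends : (chords.filter fun c => OnAlpha c.1).card +
      (chords.filter fun c => OnAlpha c.2).card = 2 * p := by
    simp only [OnAlpha, card_filter_inSide_or _ Prod.fst (by norm_num : 2 ≠ 6),
      card_filter_inSide_or _ Prod.snd (by norm_num : 2 ≠ 6)]
    omega
  have hβends : (chords.filter fun c => OnBeta c.1).card +
      (chords.filter fun c => OnBeta c.2).card = 2 * q := by
    simp only [OnBeta, card_filter_inSide_or _ Prod.fst (by norm_num : 4 ≠ 8),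
      card_filter_inSide_or _ Prod.snd (by norm_num : 4 ≠ 8)]
    omega
  have hαα_or_ββ : (chords.filter (fun c => OnAlpha c.1 ∧ OnAlpha c.2)).card = 0 ∨
      (chords.filter (fun c => OnBeta c.1 ∧ OnBeta c.2)).card = 0 := by
    by_contra! h
    obtain ⟨c, hc, hcα⟩ := Finset.filter_nonempty_iff.1 (Finset.card_ne_zero.1 h.1)
    obtain ⟨c', hc', hc'β⟩ := Finset.filter_nonempty_iff.1 (Finset.card_ne_zero.1 h.2)
    exact hnocross c hc c' hc' <| crosses_of_onAlpha_of_onBeta (hord c hc) (hord c' hc') hcα hc'β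
      (hnotsame c hc 2 (by simp)) (hnotsame c hc 6 (by simp))
      (hnotsame c' hc' 4 (by simp)) (hnotsame c' hc' 8 (by simp))
  omega

/-- Octagon lemma: in a convex octagon with sides cyclically labeled
`∂T, α, ∂T, β, ∂T, α, ∂T, β`, a pairwise disjoint chord system with all endpoints
interior to the α- and β-sides, no chord having both endpoints on the same side,
with each α-side carrying `p` endpoints and each β-side carrying `q` endpoints,
`p < q`, consists of exactly `2p` chords joining an α-side to a β-side and `q - p`
chords joining the two β-sides, with no chord joining the two α-sides. -/
theorem octagon_lemma (p q : ℕ) (hpq : p < q) (chords : Finset (ℝ × ℝ))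
    (hord : ∀ c ∈ chords, c.1 < c.2)
    (hsides : ∀ c ∈ chords,
      (InSide 2 c.1 ∨ InSide 4 c.1 ∨ InSide 6 c.1 ∨ InSide 8 c.1) ∧
      (InSide 2 c.2 ∨ InSide 4 c.2 ∨ InSide 6 c.2 ∨ InSide 8 c.2))
    (hnotsame : ∀ c ∈ chords, ∀ i ∈ ([2, 4, 6, 8] : List ℕ),
      ¬(InSide i c.1 ∧ InSide i c.2))
    (hdisj : ∀ c ∈ chords, ∀ c' ∈ chords, c ≠ c' →
      c.1 ≠ c'.1 ∧ c.1 ≠ c'.2 ∧ c.2 ≠ c'.1 ∧ c.2 ≠ c'.2)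
    (hnocross : ∀ c ∈ chords, ∀ c' ∈ chords, ¬Crosses c c')
    (hcount2 : (chords.filter (fun c => InSide 2 c.1)).card +
               (chords.filter (fun c => InSide 2 c.2)).card = p)
    (hcount6 : (chords.filter (fun c => InSide 6 c.1)).card +
               (chords.filter (fun c => InSide 6 c.2)).card = p)
    (hcount4 : (chords.filter (fun c => InSide 4 c.1)).card +
               (chords.filter (fun c => InSide 4 c.2)).card = q)
    (hcount8 : (chords.filter (fun c => InSide 8 c.1)).card +
               (chords.filter (fun c => InSide 8 c.2)).card = q) :
    (chords.filter (fun c => (OnAlpha c.1 ∧ OnBeta c.2) ∨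
      (OnBeta c.1 ∧ OnAlpha c.2))).card = 2 * p ∧
    (chords.filter (fun c => OnBeta c.1 ∧ OnBeta c.2)).card = q - p ∧
    (chords.filter (fun c => OnAlpha c.1 ∧ OnAlpha c.2)).card = 0 :=
  octagon_lemma_general p q hpq chords hord hsides hnotsame hnocross hcount2 hcount6 hcount4 hcount8
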